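/- Let 𝒢 = (G,I,O,λ) be a labelled open graph with I∩O = ∅ and λ(v) ∈ {X,Z} for all non-outputs v. Define the flow matrix M_𝒢 over F₂ as the O̅ × I̅ matrix obtained from the reduced adjacency matrix of the graph G_disc (G with all Z-labelled vertices disconnected from all other vertices) by additionally setting the (v,v) entry to 1 for every v with λ(v) = Z. Then 𝒢 has a focussed Pauli flow if and only if M_𝒢 is right-invertible over F₂. -/
import Mathlib


inductive MLabel | X | Y | Z | XY | XZ | YZ
deriving DecidableEq

open Finset

variable {V : Type} [Fintype V] [DecidableEq V]

/-- The odd neighbourhood of a set of vertices. -/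
def Odds (G : SimpleGraph V) [DecidableRel G.Adj] (A : Finset V) : Finset V :=
  Finset.univ.filter fun v => Odd (A ∩ G.neighborFinset v).card

/-- Pauli flow conditions (P1)-(P9) for a labelled open graph. -/
structure PauliFlow (G : SimpleGraph V) [DecidableRel G.Adj]
    (I O : Finset V) (lam : V → MLabel) (c : V → Finset V) (prec : V → V → Prop) : Prop where
  irrefl : ∀ u, ¬ prec u u
  trans : ∀ u v w, prec u v → prec v w → prec u w
  csub : ∀ u, u ∉ O → ∀ v ∈ c u, v ∉ I
  P1 : ∀ u, u ∉ O → ∀ v ∈ c u, v ∉ O → u ≠ v →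
      lam v ≠ MLabel.X → lam v ≠ MLabel.Y → prec u v
  P2 : ∀ u, u ∉ O → ∀ v ∈ Odds G (c u), v ∉ O → u ≠ v →
      lam v ≠ MLabel.Y → lam v ≠ MLabel.Z → prec u v
  P3 : ∀ u, u ∉ O → ∀ v, v ∉ O → ¬ prec u v → u ≠ v → lam v = MLabel.Y →
      (v ∈ c u ↔ v ∈ Odds G (c u))
  P4 : ∀ u, u ∉ O → lam u = MLabel.XY → u ∉ c u ∧ u ∈ Odds G (c u)
  P5 : ∀ u, u ∉ O → lam u = MLabel.XZ → u ∈ c u ∧ u ∈ Odds G (c u)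
  P6 : ∀ u, u ∉ O → lam u = MLabel.YZ → u ∈ c u ∧ u ∉ Odds G (c u)
  P7 : ∀ u, u ∉ O → lam u = MLabel.X → u ∈ Odds G (c u)
  P8 : ∀ u, u ∉ O → lam u = MLabel.Z → u ∈ c u
  P9 : ∀ u, u ∉ O → lam u = MLabel.Y → Xor' (u ∈ c u) (u ∈ Odds G (c u))

/-- Focussing conditions (F1)-(F3). -/
def Focussed (G : SimpleGraph V) [DecidableRel G.Adj]
    (O : Finset V) (lam : V → MLabel) (c : V → Finset V) : Prop :=
  ∀ v, v ∉ O →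
    (∀ w, w ∉ O → w ≠ v → w ∈ c v →
      lam w = MLabel.XY ∨ lam w = MLabel.X ∨ lam w = MLabel.Y) ∧
    (∀ w, w ∉ O → w ≠ v → w ∈ Odds G (c v) →
      lam w = MLabel.XZ ∨ lam w = MLabel.YZ ∨ lam w = MLabel.Y ∨ lam w = MLabel.Z) ∧
    (∀ w, w ∉ O → w ≠ v → lam w = MLabel.Y → (w ∈ c v ↔ w ∈ Odds G (c v)))

/-- The reduced adjacency matrix over F₂: rows indexed by non-outputs, columns by non-inputs. -/
def redAdj (G : SimpleGraph V) [DecidableRel G.Adj] (I O : Finset V) :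
    Matrix {v : V // v ∉ O} {v : V // v ∉ I} (ZMod 2) :=
  Matrix.of fun v u => if G.Adj v.val u.val then 1 else 0

/-- The flow matrix of a labelled open graph with labels in {X,Z}: the reduced
adjacency matrix of the graph with all Z-labelled vertices disconnected, with
an additional 1 at the `(v,v)` entry for every Z-labelled vertex `v`. -/
def flowMat (G : SimpleGraph V) [DecidableRel G.Adj]
    (I O : Finset V) (lam : V → MLabel) :
    Matrix {v : V // v ∉ O} {v : V // v ∉ I} (ZMod 2) :=
  Matrix.of fun v u =>
    if (v.val ∉ O ∧ lam v.val = MLabel.Z) ∨ (u.val ∉ O ∧ lam u.val = MLabel.Z) then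
      (if v.val = u.val then 1 else 0)
    else if G.Adj v.val u.val then 1 else 0


lemma zmod2_zero (n : ℕ) (h : ¬ Odd n) : (n : ZMod 2) = 0 := by
  rw [Nat.not_odd_iff_even] at h
  obtain ⟨k, rfl⟩ := h
  push_cast; ring_nf
  rw [show ((2:ZMod 2)) = 0 by decide]; ring

lemma zmod2_one (n : ℕ) (h : Odd n) : (n : ZMod 2) = 1 := by
  obtain ⟨k, rfl⟩ := h
  push_cast
  rw [show ((2:ZMod 2)) = 0 by decide]; ring

lemma zmod2_one_iff (n : ℕ) : (n : ZMod 2) = 1 ↔ Odd n := by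
  constructor
  · intro h; by_contra hn; rw [zmod2_zero n hn] at h; exact absurd h (by decide)
  · exact zmod2_one n

lemma zmod2_zero_iff (n : ℕ) : (n : ZMod 2) = 0 ↔ ¬ Odd n := by
  constructor
  · intro h ho; rw [zmod2_one n ho] at h; exact absurd h (by decide)
  · exact zmod2_zero n

lemma mem_Odds_iff (G : SimpleGraph V) [DecidableRel G.Adj] (A : Finset V) (v : V) :
    v ∈ Odds G A ↔ Odd (A ∩ G.neighborFinset v).card := by
  simp [Odds]

/-- Z-labelled row of the flow matrix applied to a vector. -/
lemma rowZ (G : SimpleGraph V) [DecidableRel G.Adj] (I O : Finset V) (lam : V → MLabel)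
    (x : {v : V // v ∉ I} → ZMod 2) (w : V) (hw : w ∉ O) (hZ : lam w = MLabel.Z) :
    (∑ u : {v : V // v ∉ I}, flowMat G I O lam ⟨w, hw⟩ u * x u)
      = if h : w ∈ I then 0 else x ⟨w, h⟩ := by
  have hterm : ∀ u : {v : V // v ∉ I},
      flowMat G I O lam ⟨w, hw⟩ u * x u = if w = u.val then x u else 0 := by
    intro u
    rw [flowMat, Matrix.of_apply, if_pos (Or.inl ⟨hw, hZ⟩), ite_mul, one_mul, zero_mul]
  rw [Finset.sum_congr rfl fun u _ => hterm u]
  by_cases h : w ∈ I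
  · rw [dif_pos h]
    apply Finset.sum_eq_zero
    intro u _
    rw [if_neg]
    intro he; exact u.property (he ▸ h)
  · rw [dif_neg h]
    rw [Finset.sum_congr rfl (fun u _ => if_congr (show w = u.val ↔ (⟨w,h⟩ : {v : V // v ∉ I}) = u from ⟨fun he => Subtype.ext he, fun he => congrArg Subtype.val he⟩) rfl rfl)]
    rw [Finset.sum_ite_eq]
    exact if_pos (Finset.mem_univ _)

/-- non-Z-labelled row of the flow matrix applied to an indicator vector. -/
lemma rowX (G : SimpleGraph V) [DecidableRel G.Adj] (I O : Finset V) (lam : V → MLabel)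
    (c : Finset V) (hc : ∀ u ∈ c, u ∉ I) (hcZ : ∀ u ∈ c, u ∉ O → lam u ≠ MLabel.Z)
    (w : V) (hw : w ∉ O) (hX : lam w ≠ MLabel.Z) :
    (∑ u : {v : V // v ∉ I}, flowMat G I O lam ⟨w, hw⟩ u * (if u.val ∈ c then 1 else 0))
      = ((c ∩ G.neighborFinset w).card : ZMod 2) := by
  have hterm : ∀ u : {v : V // v ∉ I},
      flowMat G I O lam ⟨w, hw⟩ u * (if u.val ∈ c then 1 else 0)
        = if G.Adj w u.val ∧ u.val ∈ c then 1 else 0 := by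
    intro u
    by_cases hu : u.val ∈ c
    · rw [if_pos hu, mul_one, flowMat, Matrix.of_apply, if_neg, if_congr (Iff.intro (fun (h : G.Adj w u.val) => ⟨h, hu⟩) (fun (h : G.Adj w u.val ∧ u.val ∈ c) => h.1)) rfl rfl]
      rintro (⟨_, h2⟩ | ⟨h1, h2⟩)
      · exact hX h2
      · exact hcZ u.val hu h1 h2
    · rw [if_neg hu, mul_zero, if_neg (fun h : G.Adj w u.val ∧ u.val ∈ c => hu h.2)]
  rw [Finset.sum_congr rfl fun u _ => hterm u, Finset.sum_boole]
  congr 1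
  apply Finset.card_bij (fun (u : {v : V // v ∉ I}) _ => u.val)
  · intro a ha
    simp only [Finset.mem_filter, Finset.mem_univ, true_and] at ha
    rw [Finset.mem_inter, SimpleGraph.mem_neighborFinset]
    exact ⟨ha.2, ha.1⟩
  · intro a _ b _ h; exact Subtype.ext h
  · intro b hb
    rw [Finset.mem_inter, SimpleGraph.mem_neighborFinset] at hb
    exact ⟨⟨b, hc b hb.1⟩, by simp [hb.1, hb.2], rfl⟩

/-- A labelled open graph with `I ∩ O = ∅` and labels in {X,Z} has a focussed
Pauli flow iff its flow matrix is right-invertible over F₂. -/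
theorem focussed_flow_iff_flowMat_right_invertible (G : SimpleGraph V)
    [DecidableRel G.Adj] (I O : Finset V) (hIO : I ∩ O = ∅)
    (lam : V → MLabel)
    (hlam : ∀ v, v ∉ O → lam v = MLabel.X ∨ lam v = MLabel.Z) :
    (∃ (c : V → Finset V) (prec : V → V → Prop),
        PauliFlow G I O lam c prec ∧ Focussed G O lam c) ↔
      ∃ N : Matrix {v : V // v ∉ I} {v : V // v ∉ O} (ZMod 2), flowMat G I O lam * N = 1 := by
  classical
  constructor
  · rintro ⟨c, prec, pf, foc⟩
    refine ⟨Matrix.of (fun u (w : {v : V // v ∉ O}) =>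
      if lam w.val = MLabel.Z then (if u.val = w.val then 1 else 0)
      else (if u.val ∈ c w.val then 1 else 0)), ?_⟩
    ext ⟨w, hw⟩ ⟨v, hv⟩
    rw [Matrix.mul_apply, Matrix.one_apply]
    by_cases hvZ : lam v = MLabel.Z
    · -- column of a Z-labelled vertex
      have hvc : v ∈ c v := pf.P8 v hv hvZ
      have hvI : v ∉ I := pf.csub v hv v hvc
      have hterm : ∀ u : {x : V // x ∉ I},
          flowMat G I O lam ⟨w, hw⟩ u * (Matrix.of (fun u (w : {v : V // v ∉ O}) =>
            if lam w.val = MLabel.Z then (if u.val = w.val then (1 : ZMod 2) else 0)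
            else (if u.val ∈ c w.val then 1 else 0))) u ⟨v, hv⟩
            = if u = ⟨v, hvI⟩ then flowMat G I O lam ⟨w, hw⟩ u else 0 := by
        intro u
        rw [Matrix.of_apply, if_pos hvZ]
        rw [mul_ite, mul_one, mul_zero]
        exact if_congr ⟨fun he => Subtype.ext he, fun he => congrArg Subtype.val he⟩ rfl rfl
      rw [Finset.sum_congr rfl fun u _ => hterm u, Finset.sum_ite_eq',
        if_pos (Finset.mem_univ _)]
      rw [flowMat, Matrix.of_apply, if_pos (Or.inr ⟨hv, hvZ⟩)]
      exact if_congr ⟨fun he => Subtype.ext he, fun he => congrArg Subtype.val he⟩ rfl rfl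
    · -- column of an X-labelled vertex
      have hcI : ∀ u ∈ c v, u ∉ I := pf.csub v hv
      have hcZ : ∀ u ∈ c v, u ∉ O → lam u ≠ MLabel.Z := by
        intro u hu huO
        by_cases h : u = v
        · subst h; exact hvZ
        · rcases (foc v hv).1 u huO h hu with h' | h' | h' <;> simp [h']
      have hcol : ∀ u : {x : V // x ∉ I},
          (Matrix.of (fun u (w : {v : V // v ∉ O}) =>
            if lam w.val = MLabel.Z then (if u.val = w.val then (1 : ZMod 2) else 0)
            else (if u.val ∈ c w.val then 1 else 0))) u ⟨v, hv⟩
            = if u.val ∈ c v then 1 else 0 := by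
        intro u; rw [Matrix.of_apply, if_neg hvZ]
      rw [Finset.sum_congr rfl fun u _ => by rw [hcol u]]
      by_cases hwZ : lam w = MLabel.Z
      · -- Z-labelled row
        have hwv : w ≠ v := fun he => hvZ (he ▸ hwZ)
        rw [rowZ G I O lam _ w hw hwZ, if_neg (fun he : (⟨w,hw⟩ : {x : V // x ∉ O}) = ⟨v,hv⟩ => hwv (congrArg Subtype.val he))]
        by_cases h : w ∈ I
        · rw [dif_pos h]
        · rw [dif_neg h, if_neg]
          intro hmem
          rcases (foc v hv).1 w hw hwv hmem with h' | h' | h' <;> simp [h'] at hwZ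
      · -- X-labelled row
        rw [rowX G I O lam (c v) hcI hcZ w hw hwZ]
        by_cases hwv : w = v
        · subst hwv
          rw [if_pos rfl]
          have hX : lam w = MLabel.X := (hlam w hw).resolve_right hwZ
          have := pf.P7 w hw hX
          rw [mem_Odds_iff] at this
          exact zmod2_one _ this
        · rw [if_neg (fun he : (⟨w,hw⟩ : {x : V // x ∉ O}) = ⟨v,hv⟩ => hwv (congrArg Subtype.val he))]
          apply zmod2_zero
          intro hodd
          have hmem : w ∈ Odds G (c v) := (mem_Odds_iff G (c v) w).mpr hodd
          have hX : lam w = MLabel.X := (hlam w hw).resolve_right hwZ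
          rcases (foc v hv).2.1 w hw hwv hmem with h' | h' | h' | h' <;> simp [h'] at hX
  · rintro ⟨N, hN⟩
    have S : ∀ t : {v : V // v ∉ O} → ZMod 2,
        ∃ x : {v : V // v ∉ I} → ZMod 2, (flowMat G I O lam).mulVec x = t := fun t =>
      ⟨N.mulVec t, by rw [Matrix.mulVec_mulVec, hN, Matrix.one_mulVec]⟩
    have hZI : ∀ v, v ∉ O → lam v = MLabel.Z → v ∉ I := by
      intro v hv hZ hvI
      obtain ⟨x, hx⟩ := S (fun w => if w = ⟨v, hv⟩ then 1 else 0)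
      have h1 : (∑ u : {y : V // y ∉ I}, flowMat G I O lam ⟨v, hv⟩ u * x u)
          = if (⟨v, hv⟩ : {y : V // y ∉ O}) = ⟨v, hv⟩ then 1 else 0 := congrFun hx ⟨v, hv⟩
      rw [rowZ G I O lam x v hv hZ, dif_pos hvI, if_pos rfl] at h1
      exact absurd h1 (by decide)
    have key : ∀ v : V, ∃ cv : Finset V, v ∉ O →
        (∀ u ∈ cv, u ∉ I) ∧
        (lam v = MLabel.Z → v ∈ cv) ∧
        (lam v ≠ MLabel.Z → v ∈ Odds G cv) ∧
        (∀ w, w ∉ O → w ≠ v → w ∈ cv → lam w = MLabel.X) ∧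
        (∀ w, w ∉ O → w ≠ v → lam w ≠ MLabel.Z → w ∉ Odds G cv) := by
      intro v
      by_cases hv : v ∉ O
      swap
      · exact ⟨∅, fun h => absurd h hv⟩
      obtain ⟨x, hx⟩ := S (fun w => if lam w.val = MLabel.Z then 0
        else if lam v = MLabel.Z then (if G.Adj w.val v then 1 else 0)
        else (if w.val = v then 1 else 0))
      have hx' : ∀ (w : V) (hw : w ∉ O),
          (∑ u : {y : V // y ∉ I}, flowMat G I O lam ⟨w, hw⟩ u * x u)
            = if lam w = MLabel.Z then 0
              else if lam v = MLabel.Z then (if G.Adj w v then 1 else 0)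
              else (if w = v then 1 else 0) := fun w hw => congrFun hx ⟨w, hw⟩
      set supp : Finset V :=
        (Finset.univ.filter fun u : {y : V // y ∉ I} => x u = 1).image Subtype.val with hsuppdef
      have hsuppI : ∀ u ∈ supp, u ∉ I := by
        intro u hu
        obtain ⟨u', _, rfl⟩ := Finset.mem_image.mp hu
        exact u'.property
      have hmem : ∀ u : {y : V // y ∉ I}, (u.val ∈ supp ↔ x u = 1) := by
        intro u
        constructor
        · intro hw
          obtain ⟨u', hu', he⟩ := Finset.mem_image.mp hw
          obtain rfl : u' = u := Subtype.ext he
          exact (Finset.mem_filter.mp hu').2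
        · intro hw
          exact Finset.mem_image.mpr ⟨u, Finset.mem_filter.mpr ⟨Finset.mem_univ _, hw⟩, rfl⟩
      have hind : x = fun u => if u.val ∈ supp then 1 else 0 := by
        funext u
        rcases (by decide : ∀ a : ZMod 2, a = 0 ∨ a = 1) (x u) with h0 | h1
        · rw [h0, if_neg]
          intro hm
          have := (hmem u).mp hm
          rw [h0] at this
          exact absurd this (by decide)
        · rw [h1, if_pos ((hmem u).mpr h1)]
      have hZrow : ∀ w, w ∉ O → lam w = MLabel.Z → w ∉ supp := by
        intro w hw hZ hwmem
        have hwI : w ∉ I := hsuppI w hwmem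
        have h1 := hx' w hw
        rw [rowZ G I O lam x w hw hZ, dif_neg hwI, if_pos hZ] at h1
        have h2 := (hmem ⟨w, hwI⟩).mp hwmem
        rw [h1] at h2
        exact absurd h2 (by decide)
      have hsuppZ : ∀ u ∈ supp, u ∉ O → lam u ≠ MLabel.Z :=
        fun u hu huO hZ => hZrow u huO hZ hu
      have hXrow : ∀ w, w ∉ O → lam w ≠ MLabel.Z →
          ((supp ∩ G.neighborFinset w).card : ZMod 2)
            = if lam v = MLabel.Z then (if G.Adj w v then 1 else 0)
              else (if w = v then 1 else 0) := by
        intro w hw hX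
        have h1 := hx' w hw
        simp only [hind] at h1
        rw [rowX G I O lam supp hsuppI hsuppZ w hw hX] at h1
        rwa [if_neg hX] at h1
      by_cases hvZ : lam v = MLabel.Z
      · have hvI : v ∉ I := hZI v hv hvZ
        have hvsupp : v ∉ supp := hZrow v hv hvZ
        refine ⟨insert v supp, fun _ =>
          ⟨?_, fun _ => Finset.mem_insert_self v supp, fun h => absurd hvZ h, ?_, ?_⟩⟩
        · intro u hu
          rcases Finset.mem_insert.mp hu with rfl | hu'
          · exact hvI
          · exact hsuppI u hu'
        · intro w hw hwv hwmem
          rcases Finset.mem_insert.mp hwmem with rfl | hw'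
          · exact absurd rfl hwv
          · exact (hlam w hw).resolve_right (hsuppZ w hw' hw)
        · intro w hw hwv hwX hwodd
          rw [mem_Odds_iff] at hwodd
          have hcard : ((insert v supp ∩ G.neighborFinset w).card : ZMod 2) = 0 := by
            by_cases hadj : G.Adj w v
            · rw [Finset.insert_inter_of_mem ((G.mem_neighborFinset w v).mpr hadj),
                Finset.card_insert_of_notMem (fun hm => hvsupp (Finset.mem_inter.mp hm).1)]
              push_cast
              rw [hXrow w hw hwX, if_pos hvZ, if_pos hadj]
              decide
            · rw [Finset.insert_inter_of_notMem
                  (fun hm => hadj ((G.mem_neighborFinset w v).mp hm)),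
                hXrow w hw hwX, if_pos hvZ, if_neg hadj]
          rw [zmod2_one _ hwodd] at hcard
          exact absurd hcard (by decide)
      · refine ⟨supp, fun _ => ⟨hsuppI, fun h => absurd h hvZ, ?_, ?_, ?_⟩⟩
        · intro _
          rw [mem_Odds_iff, ← zmod2_one_iff, hXrow v hv hvZ, if_neg hvZ, if_pos rfl]
        · intro w hw hwv hwmem
          exact (hlam w hw).resolve_right (hsuppZ w hwmem hw)
        · intro w hw hwv hwX hodd
          rw [mem_Odds_iff, ← zmod2_one_iff, hXrow w hw hwX, if_neg hvZ, if_neg hwv] at hodd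
          exact absurd hodd (by decide)
    choose c hc using key
    refine ⟨c, fun _ _ => False, ⟨fun u h => h, fun _ _ _ h _ => h,
      fun u hu => (hc u hu).1, ?_, ?_, ?_, ?_, ?_, ?_, ?_, ?_, ?_⟩, ?_⟩
    · -- P1
      intro u hu v' hv' hv'O huv hX _
      exact hX ((hc u hu).2.2.2.1 v' hv'O (Ne.symm huv) hv')
    · -- P2
      intro u hu v' hv' hv'O huv _ hZ
      exact absurd hv' ((hc u hu).2.2.2.2 v' hv'O (Ne.symm huv) hZ)
    · -- P3
      intro u _ v' hv'O _ _ hY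
      rcases hlam v' hv'O with h | h <;> simp [hY] at h
    · -- P4
      intro u hu h
      rcases hlam u hu with h' | h' <;> simp [h] at h'
    · -- P5
      intro u hu h
      rcases hlam u hu with h' | h' <;> simp [h] at h'
    · -- P6
      intro u hu h
      rcases hlam u hu with h' | h' <;> simp [h] at h'
    · -- P7
      intro u hu h
      exact (hc u hu).2.2.1 (by simp [h])
    · -- P8
      intro u hu h
      exact (hc u hu).2.1 h
    · -- P9
      intro u hu h
      rcases hlam u hu with h' | h' <;> simp [h] at h'
    · -- Focussed
      intro v hv
      refine ⟨?_, ?_, ?_⟩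
      · intro w hw hwv hmem
        exact Or.inr (Or.inl ((hc v hv).2.2.2.1 w hw hwv hmem))
      · intro w hw hwv hmem
        rcases hlam w hw with h | h
        · exact absurd hmem ((hc v hv).2.2.2.2 w hw hwv (by simp [h]))
        · exact Or.inr (Or.inr (Or.inr h))
      · intro w hw hwv hY
        rcases hlam w hw with h | h <;> simp [hY] at h
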